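/- arXiv:1712.01250 — 2 statements merged into one kernel-verified Lean document; each statement's English description precedes it below -/
import Mathlib

section
/- Let κ be a P-kernel with right KLS-function f and left KLS-function g, and define the Z-function Z := gκf. Then Z = ḡ f = g f̄, and in particular Z is symmetric, i.e., Z̄ = Z. -/
open Polynomial

namespace KLS

noncomputable section

variable {P : Type*} [PartialOrder P] [LocallyFiniteOrder P] [DecidableEq P]

/-- Convolution product in the incidence algebra `I(P)`. -/
def conv (f g : P → P → Polynomial ℤ) : P → P → Polynomial ℤ :=
  fun x z => ∑ y ∈ Finset.Icc x z, f x y * g y z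

/-- The identity element `δ` of the incidence algebra. -/
def delta : P → P → Polynomial ℤ := fun x y => if x = y then 1 else 0

/-- Pointwise sum in the incidence algebra. -/
def add (f g : P → P → Polynomial ℤ) : P → P → Polynomial ℤ :=
  fun x y => f x y + g x y

/-- The bar involution `f̄_{xy}(t) = t^{r_{xy}} f_{xy}(t⁻¹)`. -/
def bar (r : P → P → ℕ) (f : P → P → Polynomial ℤ) : P → P → Polynomial ℤ :=
  fun x y => (f x y).reflect (r x y)

/-- The hat involution `ĥ_{xy}(t) = (-1)^{r_{xy}} h_{xy}(t)`. -/
def hat (r : P → P → ℕ) (f : P → P → Polynomial ℤ) : P → P → Polynomial ℤ :=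
  fun x y => (-1 : Polynomial ℤ) ^ (r x y) * f x y

/-- `r` is a weak rank function: positive on strict pairs and additive. -/
def IsWeakRank (r : P → P → ℕ) : Prop :=
  (∀ x y : P, x < y → 0 < r x y) ∧
    ∀ x y z : P, x ≤ y → y ≤ z → r x y + r y z = r x z

/-- Membership in the subring `𝒮(P)`: `deg f_{xy} ≤ r_{xy}`. -/
def InS (r : P → P → ℕ) (f : P → P → Polynomial ℤ) : Prop :=
  ∀ x y : P, x ≤ y → (f x y).natDegree ≤ r x y

/-- Membership in `𝒮_{1/2}(P)`: `f_{xx} = 1` and `deg f_{xy} < r_{xy}/2`. -/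
def InHalf (r : P → P → ℕ) (f : P → P → Polynomial ℤ) : Prop :=
  (∀ x : P, f x x = 1) ∧ ∀ x y : P, x < y → 2 * (f x y).natDegree < r x y

/-- An incidence function vanishes off the order relation. -/
def Supported (f : P → P → Polynomial ℤ) : Prop :=
  ∀ x y : P, ¬ x ≤ y → f x y = 0

/-- `κ` is a `P`-kernel: `κ ∈ 𝒮(P)`, `κ_{xx} = 1` and `κ⁻¹ = κ̄`. -/
def IsKernel (r : P → P → ℕ) (κ : P → P → Polynomial ℤ) : Prop :=
  InS r κ ∧ (∀ x : P, κ x x = 1) ∧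
    (∀ x z : P, x ≤ z → conv κ (bar r κ) x z = delta x z) ∧
    (∀ x z : P, x ≤ z → conv (bar r κ) κ x z = delta x z)

section Aux

lemma reflect_reflect' (N : ℕ) (p : Polynomial ℤ) :
    (p.reflect N).reflect N = p :=
  Polynomial.ext fun i => by
    rw [Polynomial.coeff_reflect, Polynomial.coeff_reflect, Polynomial.revAt_invol]

lemma natDegree_reflect_le' {N : ℕ} {p : Polynomial ℤ} (h : p.natDegree ≤ N) :
    (p.reflect N).natDegree ≤ N := by
  rw [Polynomial.natDegree_le_iff_coeff_eq_zero]
  intro m hm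
  rw [Polynomial.coeff_reflect, Polynomial.revAt_eq_self_of_lt hm]
  exact Polynomial.coeff_eq_zero_of_natDegree_lt (lt_of_le_of_lt h hm)

lemma reflect_sum' {α : Type*} (N : ℕ) (s : Finset α) (F : α → Polynomial ℤ) :
    (∑ a ∈ s, F a).reflect N = ∑ a ∈ s, (F a).reflect N :=
  map_sum (AddMonoidHom.mk' (Polynomial.reflect N)
    (fun p q => Polynomial.reflect_add p q N)) F s

lemma half_natDegree_le {P : Type*} [PartialOrder P]
    (r : P → P → ℕ) (f : P → P → Polynomial ℤ) (hf : InHalf r f)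
    {x y : P} (hxy : x ≤ y) : (f x y).natDegree ≤ r x y := by
  rcases eq_or_lt_of_le hxy with rfl | h
  · simp [hf.1 x]
  · have := hf.2 x y h; omega

/-- Associativity of convolution. -/
lemma conv_assoc {P : Type*} [PartialOrder P] [LocallyFiniteOrder P]
    (a b c : P → P → Polynomial ℤ) (x z : P) :
    conv (conv a b) c x z = conv a (conv b c) x z := by
  unfold conv
  simp only [Finset.sum_mul, Finset.mul_sum]
  rw [Finset.sum_comm' (s := Finset.Icc x z) (t := fun y => Finset.Icc x y)
      (t' := Finset.Icc x z) (s' := fun w => Finset.Icc w z)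
      (f := fun y w => a x w * b w y * c y z)]
  · exact Finset.sum_congr rfl fun w _ => Finset.sum_congr rfl fun y _ => by ring
  · intro y w
    simp only [Finset.mem_Icc]
    constructor
    · rintro ⟨⟨h1, h2⟩, h3, h4⟩; exact ⟨⟨h4, h2⟩, h3, h4.trans h2⟩
    · rintro ⟨⟨h1, h2⟩, h3, h4⟩; exact ⟨⟨h3.trans h1, h2⟩, h3, h1⟩

end Aux

/-- `Z = gκf` satisfies `Z = ḡ f = g f̄`; in particular `Z̄ = Z`. -/
theorem stmt_9 {P : Type*} [PartialOrder P] [LocallyFiniteOrder P] [DecidableEq P]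
    (r : P → P → ℕ) (hr : IsWeakRank r)
    (κ f g : P → P → Polynomial ℤ) (hκ : IsKernel r κ)
    (hfhalf : InHalf r f) (hfsupp : Supported f)
    (hf : ∀ x z : P, x ≤ z → bar r f x z = conv κ f x z)
    (hghalf : InHalf r g) (hgsupp : Supported g)
    (hg : ∀ x z : P, x ≤ z → bar r g x z = conv g κ x z) :
    (∀ x z : P, x ≤ z →
        conv g (conv κ f) x z = conv (bar r g) f x z) ∧
    (∀ x z : P, x ≤ z →
        conv g (conv κ f) x z = conv g (bar r f) x z) ∧
    (∀ x z : P, x ≤ z →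
        bar r (conv g (conv κ f)) x z = conv g (conv κ f) x z) := by
  -- Z = ḡ f
  have H1 : ∀ x z : P, x ≤ z → conv g (conv κ f) x z = conv (bar r g) f x z := by
    intro x z hxz
    rw [← conv_assoc]
    unfold conv
    refine Finset.sum_congr rfl fun y hy => ?_
    rw [Finset.mem_Icc] at hy
    rw [hg x y hy.1]; rfl
  -- Z = g f̄
  have H2 : ∀ x z : P, x ≤ z → conv g (conv κ f) x z = conv g (bar r f) x z := by
    intro x z hxz
    unfold conv
    refine Finset.sum_congr rfl fun y hy => ?_
    rw [Finset.mem_Icc] at hy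
    rw [hf y z hy.2]; rfl
  refine ⟨H1, H2, ?_⟩
  intro x z hxz
  have hZ2 : conv g (conv κ f) x z
      = ∑ y ∈ Finset.Icc x z, g x y * (f y z).reflect (r y z) := H2 x z hxz
  have hZ1 : conv g (conv κ f) x z
      = ∑ y ∈ Finset.Icc x z, (g x y).reflect (r x y) * f y z := H1 x z hxz
  have : ∀ y ∈ Finset.Icc x z,
      (g x y * (f y z).reflect (r y z)).reflect (r x z)
        = (g x y).reflect (r x y) * f y z := by
    intro y hy
    rw [Finset.mem_Icc] at hy
    rw [← hr.2 x y z hy.1 hy.2,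
      Polynomial.reflect_mul _ _ (half_natDegree_le r g hghalf hy.1)
        (natDegree_reflect_le' (half_natDegree_le r f hfhalf hy.2)),
      reflect_reflect']
  show (conv g (conv κ f) x z).reflect (r x z) = conv g (conv κ f) x z
  rw [hZ2, reflect_sum', Finset.sum_congr rfl this, ← hZ1, hZ2]
end
end KLS
end

section
/- Let L be the lattice of flats of a matroid with twice the usual rank function 2r, κ ∈ 𝒮(L,2r) defined by κ_{FH}(t) := (t−1)^{r_{FH}} Σ_{F ≤ G ≤ H} (−1)^{r_{FG}} χ_{FG}(−1) χ_{GH}(t), and h^{bc}_{FG}(t) := (−t)^{r_{FG}} χ_{FG}(1−t^{-1}). Then κ is an (L,2r)-kernel and h^{bc} is its associated left KLS-function. -/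
open Polynomial

namespace KLS

noncomputable section

variable {P : Type*} [PartialOrder P] [LocallyFiniteOrder P] [DecidableEq P]

attribute [local instance] Classical.propDecidable

noncomputable local instance flatLFO {α : Type*} [Fintype α] (M : Matroid α) :
    LocallyFiniteOrder {F : Set α // M.IsFlat F} :=
  Fintype.toLocallyFiniteOrder

/-- The rank of a set in a matroid: the largest cardinality of an independent subset. -/
noncomputable def mrank {α : Type*} (M : Matroid α) (F : Set α) : ℕ :=
  sSup {n : ℕ | ∃ I : Set α, I ⊆ F ∧ M.Indep I ∧ I.ncard = n}


/-!
Write `ζ_p` for the incidence function `p ^ r_{xy}` and `μ_p` for `μ_{xy} p ^ r_{xy}`. Because `r`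
is additive, multiplying entrywise by `p ^ r` is multiplicative for convolution, so `μ_p` is the
two-sided inverse of `ζ_p`; and `μ` has constant entries, being the inverse of `ζ`. Unfolding the
definitions gives `κ = μ_{1-t} ζ_{t²-t}` and `h^{bc} = μ_{-t} ζ_{1-t}`, while the bar involution
of `2r` exchanges `1 - t` and `t² - t` and fixes `-t`. Hence
`κ κ̄ = μ_{1-t} ζ_{t²-t} μ_{t²-t} ζ_{1-t} = δ`, similarly `κ̄ κ = δ`, and
`h^{bc} κ = μ_{-t} ζ_{t²-t} = h̄^{bc}`. Finally `deg h^{bc}_{FG} < r_{FG}` because the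
coefficient of `t^{r_{FG}}` is `±χ_{FG}(1) = 0`.
-/

section Reflect

variable {R : Type*}

lemma reflect_finset_sum [Semiring R] {ι : Type*} (N : ℕ) (s : Finset ι) (f : ι → R[X]) :
    reflect N (∑ i ∈ s, f i) = ∑ i ∈ s, reflect N (f i) := by
  ext n
  simp only [coeff_reflect, finsetSum_coeff]

lemma reflect_pow [Semiring R] {p : R[X]} {N : ℕ} (hp : p.natDegree ≤ N) (n : ℕ) :
    reflect (N * n) (p ^ n) = reflect N p ^ n := by
  induction n with
  | zero => simp
  | succ n ih =>
    rw [pow_succ, Nat.mul_succ,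
      reflect_mul _ _ (natDegree_pow_le_of_le n hp |>.trans_eq (mul_comm _ _)) hp, ih, pow_succ]

lemma natDegree_one_sub_X_le [Ring R] : (1 - X : R[X]).natDegree ≤ 1 := by
  compute_degree

lemma reflect_one_sub_X_pow [Ring R] (n : ℕ) : reflect n ((1 - X : R[X]) ^ n) = (X - 1) ^ n := by
  simpa [reflect_sub, reflect_one] using reflect_pow natDegree_one_sub_X_le n

lemma reflect_two_X [Semiring R] : reflect 2 (X : R[X]) = X := by
  simpa using reflect_monomial (R := R) 2 1

lemma reflect_two_one_sub_X [Ring R] : reflect 2 (1 - X : R[X]) = X ^ 2 - X := by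
  rw [reflect_sub, reflect_one, reflect_two_X]

lemma reflect_two_X_sq_sub_X [Ring R] : reflect 2 (X ^ 2 - X : R[X]) = 1 - X := by
  rw [reflect_sub, reflect_monomial, revAt_le le_rfl, reflect_two_X, Nat.sub_self, pow_zero]

lemma reflect_two_neg_X [Ring R] : reflect 2 (-X : R[X]) = -X := by
  rw [reflect_neg, reflect_two_X]

end Reflect

def IsAdditiveRank {P : Type*} [LE P] (r : P → P → ℕ) : Prop :=
  ∀ x y z : P, x ≤ y → y ≤ z → r x y + r y z = r x z

lemma map_delta {P : Type*} [DecidableEq P] (φ : ℤ[X] →+* ℤ[X]) (x z : P) :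
    φ (delta x z) = delta x z := by
  unfold delta; split_ifs <;> simp

section Convolution

variable {P : Type*} [PartialOrder P] [LocallyFiniteOrder P] (f g h k : P → P → ℤ[X])

lemma conv_congr {f f' g g' : P → P → ℤ[X]} (hf : ∀ x y, x ≤ y → f x y = f' x y)
    (hg : ∀ x y, x ≤ y → g x y = g' x y) (x z : P) : conv f g x z = conv f' g' x z :=
  Finset.sum_congr rfl fun y hy => by
    obtain ⟨hxy, hyz⟩ := Finset.mem_Icc.mp hy
    rw [hf x y hxy, hg y z hyz]

lemma conv_assoc_s19 (x z : P) : conv (conv f g) h x z = conv f (conv g h) x z := by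
  simp only [conv, Finset.sum_mul, Finset.mul_sum]
  rw [Finset.sum_sigma', Finset.sum_sigma']
  refine Finset.sum_nbij' (fun q => ⟨q.2, q.1⟩) (fun q => ⟨q.2, q.1⟩) ?_ ?_ ?_ ?_ ?_
  · rintro ⟨y, w⟩ hq
    simp only [Finset.mem_sigma, Finset.mem_Icc] at hq ⊢
    exact ⟨⟨hq.2.1, hq.2.2.trans hq.1.2⟩, hq.2.2, hq.1.2⟩
  · rintro ⟨w, y⟩ hq
    simp only [Finset.mem_sigma, Finset.mem_Icc] at hq ⊢
    exact ⟨⟨hq.1.1.trans hq.2.1, hq.2.2⟩, hq.1.1, hq.2.1⟩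
  · rintro ⟨y, w⟩ _; rfl
  · rintro ⟨w, y⟩ _; rfl
  · rintro ⟨y, w⟩ _; exact mul_assoc _ _ _

lemma conv_self (x : P) : conv f g x x = f x x * g x x := by
  rw [conv, Finset.Icc_self, Finset.sum_singleton]

lemma delta_conv [DecidableEq P] {x z : P} (hxz : x ≤ z) : conv delta f x z = f x z := by
  simp [conv, delta, hxz]

lemma conv_delta [DecidableEq P] {x z : P} (hxz : x ≤ z) : conv f delta x z = f x z := by
  simp [conv, delta, hxz]

variable {f g h k}

lemma conv_conv_cancel [DecidableEq P] (hgh : ∀ x z, x ≤ z → conv g h x z = delta x z) (x z : P) :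
    conv (conv f g) (conv h k) x z = conv f k x z := by
  rw [conv_assoc_s19]
  refine conv_congr (fun _ _ _ => rfl) (fun y z hyz => ?_) x z
  rw [← conv_assoc_s19, conv_congr hgh (fun _ _ _ => rfl), delta_conv _ hyz]

lemma eq_of_conv_eq_delta [DecidableEq P] (hfg : ∀ x z, x ≤ z → conv f g x z = delta x z)
    (hgh : ∀ x z, x ≤ z → conv g h x z = delta x z) {x z : P} (hxz : x ≤ z) : f x z = h x z := by
  rw [← conv_delta f hxz, ← conv_congr (fun _ _ _ => rfl) hgh, ← conv_assoc_s19,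
    conv_congr hfg (fun _ _ _ => rfl), delta_conv _ hxz]

lemma map_conv (φ : ℤ[X] →+* ℤ[X]) (x z : P) :
    φ (conv f g x z) = conv (fun x y => φ (f x y)) (fun x y => φ (g x y)) x z := by
  simp only [conv, map_sum, map_mul]

lemma InS.conv {r : P → P → ℕ} (hr : IsAdditiveRank r) (hf : InS r f) (hg : InS r g) :
    InS r (conv f g) := fun x z _ =>
  natDegree_sum_le_of_forall_le _ _ fun y hy => by
    obtain ⟨hxy, hyz⟩ := Finset.mem_Icc.mp hy
    exact natDegree_mul_le.trans
      ((add_le_add (hf x y hxy) (hg y z hyz)).trans_eq (hr x y z hxy hyz))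

lemma bar_conv {r : P → P → ℕ} (hr : IsAdditiveRank r) (hf : InS r f) (hg : InS r g) {x z : P} :
    bar r (conv f g) x z = conv (bar r f) (bar r g) x z := by
  simp only [bar, conv, reflect_finset_sum]
  refine Finset.sum_congr rfl fun y hy => ?_
  obtain ⟨hxy, hyz⟩ := Finset.mem_Icc.mp hy
  rw [← hr x y z hxy hyz, reflect_mul _ _ (hf x y hxy) (hg y z hyz)]

end Convolution

def twist {P : Type*} (r : P → P → ℕ) (p : ℤ[X]) (f : P → P → ℤ[X]) : P → P → ℤ[X] :=
  fun x y => p ^ r x y * f x y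

lemma twist_twist {P : Type*} (r : P → P → ℕ) (p q : ℤ[X]) (f : P → P → ℤ[X]) :
    twist r p (twist r q f) = twist r (p * q) f := by
  funext x y
  simp only [twist, mul_pow]
  ring

section Twist

variable {P : Type*} [PartialOrder P] {r : P → P → ℕ} {f g : P → P → ℤ[X]}

lemma IsAdditiveRank.rank_self (hr : IsAdditiveRank r) (x : P) : r x x = 0 := by
  have := hr x x x le_rfl le_rfl
  omega

lemma IsAdditiveRank.const_mul (hr : IsAdditiveRank r) (N : ℕ) :
    IsAdditiveRank fun x y => N * r x y := fun x y z hxy hyz => by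
  rw [← mul_add, hr x y z hxy hyz]

lemma twist_delta [DecidableEq P] (hr : IsAdditiveRank r) (p : ℤ[X]) (x z : P) :
    twist r p delta x z = delta x z := by
  unfold twist delta
  split_ifs with h
  · rw [h, hr.rank_self, pow_zero, one_mul]
  · rw [mul_zero]

lemma InS.twist {p : ℤ[X]} {N : ℕ} (hf : ∀ x y, x ≤ y → (f x y).natDegree = 0)
    (hp : p.natDegree ≤ N) : InS (fun x y => N * r x y) (twist r p f) := fun x y hxy =>
  natDegree_mul_le.trans <| by
    rw [hf x y hxy, add_zero]
    exact (natDegree_pow_le_of_le _ hp).trans_eq (mul_comm _ _)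

lemma bar_twist {p : ℤ[X]} {N : ℕ} (hf : ∀ x y, x ≤ y → (f x y).natDegree = 0)
    (hp : p.natDegree ≤ N) {x y : P} (hxy : x ≤ y) :
    bar (fun x y => N * r x y) (twist r p f) x y = twist r (reflect N p) f x y := by
  show reflect (N * r x y) (p ^ r x y * f x y) = reflect N p ^ r x y * f x y
  rw [← add_zero (N * r x y),
    reflect_mul _ _ ((natDegree_pow_le_of_le _ hp).trans_eq (mul_comm _ _)) (hf x y hxy).le,
    reflect_pow hp, eq_C_of_natDegree_eq_zero (hf x y hxy), reflect_C, pow_zero,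
    mul_one]

variable [LocallyFiniteOrder P]

lemma twist_conv (hr : IsAdditiveRank r) (p : ℤ[X]) (f g : P → P → ℤ[X]) (x z : P) :
    twist r p (conv f g) x z = conv (twist r p f) (twist r p g) x z := by
  simp only [twist, conv, Finset.mul_sum]
  refine Finset.sum_congr rfl fun y hy => ?_
  obtain ⟨hxy, hyz⟩ := Finset.mem_Icc.mp hy
  rw [← hr x y z hxy hyz, pow_add]
  ring

lemma conv_twist_eq_delta [DecidableEq P] (hr : IsAdditiveRank r) (p : ℤ[X])
    (hfg : ∀ x z, x ≤ z → conv f g x z = delta x z) (x z : P) (hxz : x ≤ z) :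
    conv (twist r p f) (twist r p g) x z = delta x z := by
  rw [← twist_conv hr, ← twist_delta hr p]
  exact congrArg _ (hfg x z hxz)

end Twist

section BC

variable {P : Type*} [PartialOrder P] [LocallyFiniteOrder P]
  {r : P → P → ℕ} {μ : P → P → ℤ[X]}

lemma natDegree_eq_zero_of_zeta_inverse [DecidableEq P]
    (hμ₁ : ∀ x z, x ≤ z → conv (fun _ _ => 1) μ x z = delta x z)
    (hμ₂ : ∀ x z, x ≤ z → conv μ (fun _ _ => 1) x z = delta x z) {x z : P} (hxz : x ≤ z) :
    (μ x z).natDegree = 0 := by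
  -- `C ∘ constantCoeff` turns `μ` into another left inverse of `ζ`; left and right inverses agree.
  let φ : ℤ[X] →+* ℤ[X] := C.comp constantCoeff
  have hφμ : ∀ x z, x ≤ z → conv (fun x y => φ (μ x y)) (fun _ _ => 1) x z = delta x z :=
    fun x z hxz => by rw [← map_delta φ, ← hμ₂ x z hxz, map_conv, map_one]
  rw [← eq_of_conv_eq_delta hφμ hμ₁ hxz]
  exact natDegree_C _

def charFn (r : P → P → ℕ) (μ : P → P → ℤ[X]) : P → P → ℤ[X] :=
  conv μ (bar r fun _ _ => 1)

def bcKernel (r : P → P → ℕ) (μ : P → P → ℤ[X]) : P → P → ℤ[X] := fun F H =>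
  (X - 1) ^ r F H * ∑ G ∈ Finset.Icc F H,
    (-1 : ℤ[X]) ^ r F G * C ((charFn r μ F G).eval (-1)) * charFn r μ G H

def bcKLS (r : P → P → ℕ) (μ : P → P → ℤ[X]) : P → P → ℤ[X] := fun F G =>
  (-1) ^ r F G * ((charFn r μ F G).comp (1 - X)).reflect (r F G)

lemma charFn_eq_conv_twist : charFn r μ = conv μ (twist r X fun _ _ => 1) := by
  refine congrArg (conv μ) (funext₂ fun x y => ?_)
  rw [bar, twist, reflect_one, mul_one]

lemma bcKLS_eq_conv_twist (hr : IsAdditiveRank r) (hμ : ∀ x y, x ≤ y → (μ x y).natDegree = 0)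
    (x z : P) : bcKLS r μ x z = conv (twist r (-X) μ) (twist r (1 - X) fun _ _ => 1) x z := by
  simp only [bcKLS, charFn_eq_conv_twist, conv, twist, sum_comp, reflect_finset_sum,
    Finset.mul_sum]
  refine Finset.sum_congr rfl fun y hy => ?_
  obtain ⟨hxy, hyz⟩ := Finset.mem_Icc.mp hy
  rw [eq_C_of_natDegree_eq_zero (hμ x y hxy)]
  simp only [mul_one, mul_comp, C_comp, X_pow_comp]
  rw [← hr x y z hxy hyz, reflect_mul _ _ ((natDegree_C _).trans_le (Nat.zero_le _))
    (natDegree_pow_le_of_le _ natDegree_one_sub_X_le |>.trans_eq (mul_one _)), reflect_C,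
    reflect_one_sub_X_pow, ← neg_sub (X : ℤ[X]) 1, neg_pow (X - 1 : ℤ[X]),
    neg_pow (X : ℤ[X]), pow_add]
  ring

lemma neg_one_pow_mul_C_eval_charFn (hr : IsAdditiveRank r)
    (hμ : ∀ x y, x ≤ y → (μ x y).natDegree = 0) :
    (fun x y => (-1 : ℤ[X]) ^ r x y * C ((charFn r μ x y).eval (-1))) =
      conv (twist r (-1) μ) fun _ _ => 1 := by
  funext x z
  simp only [charFn_eq_conv_twist, conv, twist, eval_finsetSum, eval_mul, eval_pow, eval_X,
    mul_one, map_sum, Finset.mul_sum]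
  refine Finset.sum_congr rfl fun y hy => ?_
  obtain ⟨hxy, hyz⟩ := Finset.mem_Icc.mp hy
  have hsq : ((-1 : ℤ[X]) ^ r y z) * (-1) ^ r y z = 1 := by
    rw [← pow_add, Even.neg_one_pow ⟨_, rfl⟩]
  rw [eq_C_of_natDegree_eq_zero (hμ x y hxy), eval_C, ← hr x y z hxy hyz, map_mul, map_pow,
    map_neg, map_one, pow_add]
  linear_combination ((-1 : ℤ[X]) ^ r x y * C ((μ x y).coeff 0)) * hsq

lemma bcKernel_eq_conv_twist [DecidableEq P] (hr : IsAdditiveRank r)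
    (hμ : ∀ x y, x ≤ y → (μ x y).natDegree = 0)
    (hμ₁ : ∀ x z, x ≤ z → conv (fun _ _ => 1) μ x z = delta x z) (x z : P) :
    bcKernel r μ x z = conv (twist r (1 - X) μ) (twist r (X ^ 2 - X) fun _ _ => 1) x z := by
  calc bcKernel r μ x z
      = twist r (X - 1) (conv (fun x y => (-1 : ℤ[X]) ^ r x y * C ((charFn r μ x y).eval (-1)))
          (charFn r μ)) x z := rfl
    _ = twist r (X - 1) (conv (conv (twist r (-1) μ) fun _ _ => 1)
          (conv μ (twist r X fun _ _ => 1))) x z := by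
        rw [neg_one_pow_mul_C_eval_charFn hr hμ, charFn_eq_conv_twist]
    _ = twist r (X - 1) (conv (twist r (-1) μ) (twist r X fun _ _ => 1)) x z :=
        congrArg ((X - 1) ^ r x z * ·) (conv_conv_cancel hμ₁ x z)
    _ = conv (twist r (X - 1) (twist r (-1) μ)) (twist r (X - 1) (twist r X fun _ _ => 1)) x z :=
        twist_conv hr _ _ _ x z
    _ = _ := by
        rw [twist_twist, twist_twist, show (X - 1) * -1 = (1 - X : ℤ[X]) by ring,
          show (X - 1) * X = (X ^ 2 - X : ℤ[X]) by ring]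

lemma bar_bcKernel_eq_conv_twist [DecidableEq P] (hr : IsAdditiveRank r)
    (hμ : ∀ x y, x ≤ y → (μ x y).natDegree = 0)
    (hμ₁ : ∀ x z, x ≤ z → conv (fun _ _ => 1) μ x z = delta x z) (x z : P) :
    bar (fun x y => 2 * r x y) (bcKernel r μ) x z =
      conv (twist r (X ^ 2 - X) μ) (twist r (1 - X) fun _ _ => 1) x z := by
  have hp : (1 - X : ℤ[X]).natDegree ≤ 2 := by compute_degree!
  have hq : (X ^ 2 - X : ℤ[X]).natDegree ≤ 2 := by compute_degree!
  have hζ : ∀ x y : P, x ≤ y → (1 : ℤ[X]).natDegree = 0 := fun _ _ _ => natDegree_one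
  calc bar (fun x y => 2 * r x y) (bcKernel r μ) x z
      = bar (fun x y => 2 * r x y) (conv (twist r (1 - X) μ)
          (twist r (X ^ 2 - X) fun _ _ => 1)) x z :=
        congrArg (reflect _) (bcKernel_eq_conv_twist hr hμ hμ₁ x z)
    _ = _ := by
        rw [bar_conv (hr.const_mul 2) (InS.twist hμ hp) (InS.twist hζ hq),
          conv_congr (fun _ _ => bar_twist hμ hp) (fun _ _ => bar_twist hζ hq),
          reflect_two_one_sub_X, reflect_two_X_sq_sub_X]

lemma bar_bcKLS_eq_conv_twist (hr : IsAdditiveRank r)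
    (hμ : ∀ x y, x ≤ y → (μ x y).natDegree = 0) (x z : P) :
    bar (fun x y => 2 * r x y) (bcKLS r μ) x z =
      conv (twist r (-X) μ) (twist r (X ^ 2 - X) fun _ _ => 1) x z := by
  have hp : (-X : ℤ[X]).natDegree ≤ 2 := by compute_degree!
  have hq : (1 - X : ℤ[X]).natDegree ≤ 2 := by compute_degree!
  have hζ : ∀ x y : P, x ≤ y → (1 : ℤ[X]).natDegree = 0 := fun _ _ _ => natDegree_one
  calc bar (fun x y => 2 * r x y) (bcKLS r μ) x z
      = bar (fun x y => 2 * r x y) (conv (twist r (-X) μ) (twist r (1 - X) fun _ _ => 1)) x z :=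
        congrArg (reflect _) (bcKLS_eq_conv_twist hr hμ x z)
    _ = _ := by
        rw [bar_conv (hr.const_mul 2) (InS.twist hμ hp) (InS.twist hζ hq),
          conv_congr (fun _ _ => bar_twist hμ hp) (fun _ _ => bar_twist hζ hq), reflect_two_neg_X,
          reflect_two_one_sub_X]

lemma apply_self_eq_one_of_zeta_conv [DecidableEq P]
    (hμ₁ : ∀ x z, x ≤ z → conv (fun _ _ => 1) μ x z = delta x z) (x : P) : μ x x = 1 := by
  simpa [conv_self, delta] using hμ₁ x x le_rfl

lemma conv_twist_twist_self [DecidableEq P] (hr : IsAdditiveRank r)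
    (hμ₁ : ∀ x z, x ≤ z → conv (fun _ _ => 1) μ x z = delta x z) (p q : ℤ[X]) (x : P) :
    conv (twist r p μ) (twist r q fun _ _ => 1) x x = 1 := by
  simp [conv_self, twist, hr.rank_self, apply_self_eq_one_of_zeta_conv hμ₁]

lemma natDegree_bcKLS_le (hr : IsAdditiveRank r) (hμ : ∀ x y, x ≤ y → (μ x y).natDegree = 0)
    {x y : P} (hxy : x ≤ y) : (bcKLS r μ x y).natDegree ≤ r x y := by
  have hA : InS r (twist r (-X) μ) := by
    simpa only [one_mul] using InS.twist (N := 1) hμ (by compute_degree!)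
  have hB : InS r (twist r (1 - X) fun _ _ => 1) := by
    simpa only [one_mul] using
      InS.twist (N := 1) (fun _ _ _ => natDegree_one) natDegree_one_sub_X_le
  exact (bcKLS_eq_conv_twist hr hμ x y).symm ▸ InS.conv hr hA hB x y hxy

lemma coeff_bcKLS_rank [DecidableEq P]
    (hμ₂ : ∀ x z, x ≤ z → conv μ (fun _ _ => 1) x z = delta x z) {x y : P} (hxy : x < y) :
    (bcKLS r μ x y).coeff (r x y) = 0 := by
  have hχ : (charFn r μ x y).eval 1 = 0 := by
    simpa [charFn_eq_conv_twist, conv, twist, eval_finsetSum, delta, hxy.ne] using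
      congrArg (eval 1) (hμ₂ x y hxy.le)
  rw [bcKLS, show (-1 : ℤ[X]) ^ r x y = C ((-1) ^ r x y) by simp, coeff_C_mul, coeff_reflect,
    revAt_le le_rfl, Nat.sub_self, coeff_zero_eq_eval_zero, eval_comp]
  simp [hχ]

theorem isKernel_bcKernel [DecidableEq P] (hr : IsAdditiveRank r)
    (hμ₁ : ∀ x z, x ≤ z → conv (fun _ _ => 1) μ x z = delta x z)
    (hμ₂ : ∀ x z, x ≤ z → conv μ (fun _ _ => 1) x z = delta x z) :
    IsKernel (fun x y => 2 * r x y) (bcKernel r μ) := by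
  have hμ x y (hxy : x ≤ y) := natDegree_eq_zero_of_zeta_inverse hμ₁ hμ₂ hxy
  have hκ := bcKernel_eq_conv_twist hr hμ hμ₁
  have hκbar := bar_bcKernel_eq_conv_twist hr hμ hμ₁
  refine ⟨?_, fun x => ?_, fun x z hxz => ?_, fun x z hxz => ?_⟩
  · rw [funext₂ hκ]
    exact InS.conv (hr.const_mul 2) (InS.twist hμ (by compute_degree!))
      (InS.twist (fun _ _ _ => natDegree_one) (by compute_degree!))
  · exact (hκ x x).trans (conv_twist_twist_self hr hμ₁ _ _ x)
  · rw [conv_congr (fun x y _ => hκ x y) (fun x y _ => hκbar x y),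
      conv_conv_cancel (conv_twist_eq_delta hr _ hμ₁), conv_twist_eq_delta hr _ hμ₂ x z hxz]
  · rw [conv_congr (fun x y _ => hκbar x y) (fun x y _ => hκ x y),
      conv_conv_cancel (conv_twist_eq_delta hr _ hμ₁), conv_twist_eq_delta hr _ hμ₂ x z hxz]

theorem inHalf_bcKLS [DecidableEq P] (hr : IsWeakRank r)
    (hμ₁ : ∀ x z, x ≤ z → conv (fun _ _ => 1) μ x z = delta x z)
    (hμ₂ : ∀ x z, x ≤ z → conv μ (fun _ _ => 1) x z = delta x z) :
    InHalf (fun x y => 2 * r x y) (bcKLS r μ) := by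
  have hμ x y (hxy : x ≤ y) := natDegree_eq_zero_of_zeta_inverse hμ₁ hμ₂ hxy
  refine ⟨fun x => ?_, fun x y hxy => ?_⟩
  · exact (bcKLS_eq_conv_twist hr.2 hμ x x).trans (conv_twist_twist_self hr.2 hμ₁ _ _ x)
  · show 2 * (bcKLS r μ x y).natDegree < 2 * r x y
    have := natDegree_le_pred (natDegree_bcKLS_le hr.2 hμ hxy.le) (coeff_bcKLS_rank hμ₂ hxy)
    have := hr.1 x y hxy
    omega

theorem bar_bcKLS_eq_conv_bcKernel [DecidableEq P] (hr : IsAdditiveRank r)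
    (hμ₁ : ∀ x z, x ≤ z → conv (fun _ _ => 1) μ x z = delta x z)
    (hμ₂ : ∀ x z, x ≤ z → conv μ (fun _ _ => 1) x z = delta x z) (x z : P) :
    bar (fun x y => 2 * r x y) (bcKLS r μ) x z = conv (bcKLS r μ) (bcKernel r μ) x z := by
  have hμ x y (hxy : x ≤ y) := natDegree_eq_zero_of_zeta_inverse hμ₁ hμ₂ hxy
  rw [bar_bcKLS_eq_conv_twist hr hμ, conv_congr (fun x y _ => bcKLS_eq_conv_twist hr hμ x y)
    (fun x y _ => bcKernel_eq_conv_twist hr hμ hμ₁ x y),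
    conv_conv_cancel (conv_twist_eq_delta hr _ hμ₁)]

end BC

section Matroid

variable {α : Type*} [Finite α] (M : Matroid α)

lemma cast_mrank (F : Set α) : (mrank M F : ℕ∞) = M.eRk F := by
  let S := {n : ℕ | ∃ I : Set α, I ⊆ F ∧ M.Indep I ∧ I.ncard = n}
  have hbdd : BddAbove S := ⟨Nat.card α, by rintro _ ⟨I, -, -, rfl⟩; exact Set.ncard_le_card I⟩
  refine le_antisymm ?_ (M.eRk_le_iff.2 fun I hIF hI => ?_)
  · obtain ⟨I, hIF, hI, hcard⟩ : sSup S ∈ S :=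
      Nat.sSup_mem ⟨0, ∅, Set.empty_subset F, M.empty_indep, Set.ncard_empty α⟩ hbdd
    rw [mrank, ← hcard, I.toFinite.cast_ncard_eq]
    exact hI.encard_le_eRk_of_subset hIF
  · rw [← I.toFinite.cast_ncard_eq]
    exact_mod_cast le_csSup hbdd ⟨I, hIF, hI, rfl⟩

lemma mrank_mono {F G : Set α} (h : F ⊆ G) : mrank M F ≤ mrank M G := by
  exact_mod_cast (cast_mrank M F).trans_le ((M.eRk_mono h).trans_eq (cast_mrank M G).symm)

lemma mrank_lt_mrank_of_ssubset {F G : Set α} (hF : M.IsFlat F) (hG : G ⊆ M.E)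
    (hFG : F ⊂ G) : mrank M F < mrank M G := by
  obtain ⟨e, heG, heF⟩ := Set.exists_of_ssubset hFG
  have hins := M.eRk_insert_eq_add_one (X := F) ⟨hG heG, hF.closure.symm ▸ heF⟩
  have := M.eRk_mono (Set.insert_subset heG hFG.subset)
  rw [hins, ← cast_mrank, ← cast_mrank] at this
  exact_mod_cast this

lemma isWeakRank_of_mrank_sub {rk : {F : Set α // M.IsFlat F} → {F : Set α // M.IsFlat F} → ℕ}
    (hrk : ∀ F G, rk F G = mrank M G.1 - mrank M F.1) : IsWeakRank rk := by
  refine ⟨fun F G hFG => ?_, fun F G H hFG hGH => ?_⟩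
  · have := mrank_lt_mrank_of_ssubset M F.2 G.2.subset_ground hFG
    rw [hrk]
    omega
  · have := mrank_mono M (show F.1 ⊆ G.1 from hFG)
    have := mrank_mono M (show G.1 ⊆ H.1 from hGH)
    rw [hrk, hrk, hrk]
    omega

end Matroid

/-- on the lattice of flats `L` of a matroid with doubled rank `2r`,
`κ_{FH}(t) = (t-1)^{r_{FH}} Σ_{F≤G≤H} (-1)^{r_{FG}} χ_{FG}(-1) χ_{GH}(t)` is an
`(L,2r)`-kernel whose left KLS-function is
`h^{bc}_{FG}(t) = (-t)^{r_{FG}} χ_{FG}(1 - t⁻¹)`. -/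
theorem stmt_19 {α : Type*} [Fintype α] (M : Matroid α)
    (rk : {F : Set α // M.IsFlat F} → {F : Set α // M.IsFlat F} → ℕ)
    (hrk : ∀ F G : {F : Set α // M.IsFlat F}, rk F G = mrank M G.1 - mrank M F.1)
    (μ χ κ hbc : {F : Set α // M.IsFlat F} → {F : Set α // M.IsFlat F} → Polynomial ℤ)
    (hμ₁ : ∀ F H : {F : Set α // M.IsFlat F}, F ≤ H →
      conv (fun _ _ => (1 : Polynomial ℤ)) μ F H = delta F H)
    (hμ₂ : ∀ F H : {F : Set α // M.IsFlat F}, F ≤ H →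
      conv μ (fun _ _ => (1 : Polynomial ℤ)) F H = delta F H)
    (hχ : ∀ F G : {F : Set α // M.IsFlat F},
      χ F G = conv μ (bar rk fun _ _ => (1 : Polynomial ℤ)) F G)
    (hκdef : ∀ F H : {F : Set α // M.IsFlat F},
      κ F H = (X - 1 : Polynomial ℤ) ^ (rk F H) *
        ∑ G ∈ Finset.Icc F H,
          (-1 : Polynomial ℤ) ^ (rk F G) * C ((χ F G).eval (-1)) * χ G H)
    (hbcdef : ∀ F G : {F : Set α // M.IsFlat F},
      hbc F G = (-1 : Polynomial ℤ) ^ (rk F G) *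
        ((χ F G).comp (1 - X)).reflect (rk F G)) :
    IsKernel (fun F G => 2 * rk F G) κ ∧
    InHalf (fun F G => 2 * rk F G) hbc ∧
    (∀ F H : {F : Set α // M.IsFlat F}, F ≤ H →
      bar (fun F G => 2 * rk F G) hbc F H = conv hbc κ F H) := by
  obtain rfl : χ = charFn rk μ := funext₂ hχ
  obtain rfl : κ = bcKernel rk μ := funext₂ hκdef
  obtain rfl : hbc = bcKLS rk μ := funext₂ hbcdef
  have hr := isWeakRank_of_mrank_sub M hrk
  exact ⟨isKernel_bcKernel hr.2 hμ₁ hμ₂, inHalf_bcKLS hr hμ₁ hμ₂,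
    fun F H _ => bar_bcKLS_eq_conv_bcKernel hr.2 hμ₁ hμ₂ F H⟩
end
end KLS
end
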